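/- arXiv:2411.00906 — 4 statements merged into one kernel-verified Lean document; each statement's English description precedes it below -/
import Mathlib

section
/- Let X be an intrinsic metric space and p ∈ X. For the conformal deformation metric d_ε(x,y) = inf_γ ∫_γ ρ_ε ds, where ρ_ε(x) = exp(−ε d(x,p)) and the infimum is over rectifiable curves γ from x to y, one has d_ε(x, p) ≤ e^ε/ε for every x ∈ X; consequently diam(X, d_ε) ≤ 2e^ε/ε. -/
open Set Filter Metric MeasureTheory

/-- Conformal density `ρ_ε(x) = exp(-ε d(x,p))`. -/
noncomputable def rho {X : Type*} [MetricSpace X] (ε : ℝ) (p x : X) : ℝ :=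
  Real.exp (-(ε * dist x p))

/-- `γ : [0,L] → X` is a curve parametrized by arclength: continuous, and the
length (total variation) of `γ` on `[s,t] ⊆ [0,L]` equals `t - s`. -/
def IsUnitSpeed {X : Type*} [MetricSpace X] (γ : ℝ → X) (L : ℝ) : Prop :=
  ContinuousOn γ (Set.Icc 0 L) ∧
    ∀ s t : ℝ, 0 ≤ s → s ≤ t → t ≤ L →
      eVariationOn γ (Set.Icc s t) = ENNReal.ofReal (t - s)

/-- Conformal deformation distance `d_ρ(x,y) = inf_γ ∫_γ ρ ds`, the infimum taken
over rectifiable curves from `x` to `y` (parametrized by arclength). -/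
noncomputable def confDist {X : Type*} [MetricSpace X] (ρ : X → ℝ) (x y : X) : ℝ :=
  sInf { l : ℝ | ∃ (γ : ℝ → X) (T : ℝ), 0 ≤ T ∧ IsUnitSpeed γ T ∧
    γ 0 = x ∧ γ T = y ∧ l = ∫ t in (0:ℝ)..T, ρ (γ t) }

/-- `X` is intrinsic: any two points can be joined, for each `c > 1`, by a curve
of length at most `c·d(x,y)`. -/
def Intrinsic (X : Type*) [MetricSpace X] : Prop :=
  ∀ x y : X, ∀ c : ℝ, 1 < c → ∃ (γ : ℝ → X) (T : ℝ), 0 ≤ T ∧ IsUnitSpeed γ T ∧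
    γ 0 = x ∧ γ T = y ∧ T ≤ c * dist x y

/-- Gromov product `(x|y)_p`. -/
noncomputable def gprod {X : Type*} [MetricSpace X] (x y p : X) : ℝ :=
  (dist x p + dist y p - dist x y) / 2

/-- `X` is Gromov `δ`-hyperbolic. -/
def GromovHyperbolic (X : Type*) [MetricSpace X] (δ : ℝ) : Prop :=
  ∀ x y z p : X, gprod x z p ≥ min (gprod x y p) (gprod y z p) - δ

/-- A sequence is Cauchy with respect to a (possibly different) distance function `d`. -/
def CauchyIn {X : Type*} (d : X → X → ℝ) (u : ℕ → X) : Prop :=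
  ∀ η : ℝ, 0 < η → ∃ N : ℕ, ∀ m n : ℕ, N ≤ m → N ≤ n → d (u m) (u n) < η

/-- A sequence does not converge to any point of `X` with respect to `d`. -/
def DivergesIn {X : Type*} (d : X → X → ℝ) (u : ℕ → X) : Prop :=
  ¬ ∃ z : X, Filter.Tendsto (fun n => d (u n) z) Filter.atTop (nhds 0)

/-- A sequence representing a point of the metric boundary of `(X, d)`:
`d`-Cauchy but not `d`-convergent in `X`. -/
def BoundarySeq {X : Type*} (d : X → X → ℝ) (u : ℕ → X) : Prop :=
  CauchyIn d u ∧ DivergesIn d u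

/-- Distance from `z` to the metric boundary of `(X,d)`: infimum, over boundary
points (represented by Cauchy non-convergent sequences), of the limiting distance. -/
noncomputable def bdryDist {X : Type*} (d : X → X → ℝ) (z : X) : ℝ :=
  sInf { r : ℝ | ∃ u : ℕ → X, BoundarySeq d u ∧
    Filter.Tendsto (fun n => d z (u n)) Filter.atTop (nhds r) }

/-- A Gromov sequence: `(u_i|u_j)_p → ∞` as `i, j → ∞`. -/
def GromovSeq {X : Type*} [MetricSpace X] (p : X) (u : ℕ → X) : Prop :=
  Filter.Tendsto (fun nm : ℕ × ℕ => gprod (u nm.1) (u nm.2) p)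
    Filter.atTop Filter.atTop

section Aux

variable {X : Type*} [MetricSpace X]

lemma unitSpeed_dist_le {γ : ℝ → X} {L : ℝ} (h : IsUnitSpeed γ L)
    {s t : ℝ} (hs : 0 ≤ s) (hst : s ≤ t) (ht : t ≤ L) :
    dist (γ s) (γ t) ≤ t - s := by
  have h1 := eVariationOn.edist_le γ (show s ∈ Set.Icc s t from ⟨le_rfl, hst⟩)
    (show t ∈ Set.Icc s t from ⟨hst, le_rfl⟩)
  rw [h.2 s t hs hst ht] at h1
  rw [dist_edist]
  calc (edist (γ s) (γ t)).toReal ≤ (ENNReal.ofReal (t - s)).toReal :=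
        ENNReal.toReal_mono (by simp) h1
    _ = t - s := ENNReal.toReal_ofReal (by linarith)

lemma isUnitSpeed_of_var {γ : ℝ → X} {L : ℝ}
    (h : ∀ s t : ℝ, 0 ≤ s → s ≤ t → t ≤ L →
      eVariationOn γ (Set.Icc s t) = ENNReal.ofReal (t - s)) :
    IsUnitSpeed γ L := by
  refine ⟨?_, h⟩
  have lip : LipschitzOnWith 1 γ (Set.Icc 0 L) := by
    intro a ha b hb
    wlog hab : a ≤ b generalizing a b
    · rw [edist_comm (γ a), edist_comm a]; exact this hb ha (le_of_not_ge hab)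
    calc edist (γ a) (γ b) ≤ eVariationOn γ (Set.Icc a b) :=
          eVariationOn.edist_le γ ⟨le_rfl, hab⟩ ⟨hab, le_rfl⟩
      _ = ENNReal.ofReal (b - a) := h a b ha.1 hab hb.2
      _ ≤ 1 * edist a b := by
          rw [one_mul, edist_dist, Real.dist_eq, abs_sub_comm]
          exact ENNReal.ofReal_le_ofReal (le_abs_self _)
  exact lip.continuousOn

lemma isUnitSpeed_reverse {γ : ℝ → X} {L : ℝ} (h : IsUnitSpeed γ L) :
    IsUnitSpeed (fun u => γ (L - u)) L := by
  apply isUnitSpeed_of_var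
  intro s t hs hst ht
  have heq : (fun u => γ (L - u)) = γ ∘ (fun u => L - u) := rfl
  rw [heq, eVariationOn.comp_eq_of_antitoneOn γ _
      (fun a _ b _ hab => by linarith), Set.image_const_sub_Icc]
  rw [h.2 (L - t) (L - s) (by linarith) (by linarith) (by linarith)]
  congr 1; ring

lemma isUnitSpeed_concat {γ1 γ2 : ℝ → X} {T1 T2 : ℝ}
    (h1 : IsUnitSpeed γ1 T1) (h2 : IsUnitSpeed γ2 T2) (hT2 : 0 ≤ T2)
    (hend : γ1 T1 = γ2 0) :
    IsUnitSpeed (fun t => if t ≤ T1 then γ1 t else γ2 (t - T1)) (T1 + T2) := by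
  apply isUnitSpeed_of_var
  set Γ : ℝ → X := fun t => if t ≤ T1 then γ1 t else γ2 (t - T1) with hΓ
  have key1 : ∀ s t : ℝ, 0 ≤ s → s ≤ t → t ≤ T1 →
      eVariationOn Γ (Set.Icc s t) = ENNReal.ofReal (t - s) := by
    intro s t hs hst ht
    have e : Set.EqOn Γ γ1 (Set.Icc s t) := fun u hu => by
      simp only [hΓ, if_pos (hu.2.trans ht)]
    rw [eVariationOn.eq_of_eqOn e]
    exact h1.2 s t hs hst ht
  have key2 : ∀ s t : ℝ, T1 ≤ s → s ≤ t → t ≤ T1 + T2 →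
      eVariationOn Γ (Set.Icc s t) = ENNReal.ofReal (t - s) := by
    intro s t hs hst ht
    have e : Set.EqOn Γ (γ2 ∘ fun u => u - T1) (Set.Icc s t) := by
      intro u hu
      by_cases hc : u ≤ T1
      · have hu1 : u = T1 := le_antisymm hc (hs.trans hu.1)
        simp [hΓ, hu1, hend, Function.comp]
      · simp [hΓ, if_neg hc, Function.comp]
    rw [eVariationOn.eq_of_eqOn e,
      eVariationOn.comp_eq_of_monotoneOn γ2 _ (fun a _ b _ hab => by linarith),
      Set.image_sub_const_Icc,
      h2.2 (s - T1) (t - T1) (by linarith) (by linarith) (by linarith)]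
    congr 1; ring
  intro s t hs hst ht
  rcases le_total t T1 with h | h
  · exact key1 s t hs hst h
  rcases le_total T1 s with h' | h'
  · exact key2 s t h' hst ht
  · have split := eVariationOn.Icc_add_Icc Γ (s := Set.Icc s t) h' h ⟨h', h⟩
    rw [Set.inter_eq_right.mpr (Set.Icc_subset_Icc le_rfl h),
      Set.inter_eq_right.mpr (Set.Icc_subset_Icc h' le_rfl),
      Set.inter_self] at split
    rw [← split, key1 s T1 hs h' le_rfl, key2 T1 t le_rfl h ht,
      ← ENNReal.ofReal_add (by linarith) (by linarith)]
    congr 1; ring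

lemma rho_continuous (ε : ℝ) (p : X) : Continuous (rho ε p) := by
  unfold rho
  exact Real.continuous_exp.comp ((continuous_const.mul (continuous_id.dist continuous_const)).neg)

lemma leg_bound {ε : ℝ} (hε : 0 < ε) (p x : X) {γ : ℝ → X} {T : ℝ}
    (hT0 : 0 ≤ T) (hus : IsUnitSpeed γ T) (hx : γ 0 = x)
    (hT : T ≤ dist x p + 1) :
    ∫ t in (0:ℝ)..T, rho ε p (γ t) ≤ Real.exp ε / ε := by
  set d := dist x p with hd
  have hd0 : 0 ≤ d := dist_nonneg
  have pt : ∀ t ∈ Set.Icc (0:ℝ) T, rho ε p (γ t) ≤ Real.exp (-(ε * d)) * Real.exp (t * ε) := by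
    intro t ht
    have h1 : dist (γ 0) (γ t) ≤ t - 0 := unitSpeed_dist_le hus le_rfl ht.1 ht.2
    have h2 : d - t ≤ dist (γ t) p := by
      have htri := dist_triangle x (γ t) p
      have : dist x (γ t) ≤ t := by rw [← hx, dist_comm]; rw [dist_comm] at h1; linarith
      linarith
    rw [← Real.exp_add]
    unfold rho
    apply Real.exp_le_exp.mpr
    nlinarith
  have hcont1 : ContinuousOn (fun t => rho ε p (γ t)) (Set.Icc 0 T) :=
    (rho_continuous ε p).comp_continuousOn hus.1
  have hi1 : IntervalIntegrable (fun t => rho ε p (γ t)) MeasureTheory.volume 0 T := by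
    apply ContinuousOn.intervalIntegrable
    rwa [Set.uIcc_of_le hT0]
  have hi2 : IntervalIntegrable (fun t => Real.exp (-(ε * d)) * Real.exp (t * ε))
      MeasureTheory.volume 0 T :=
    (Continuous.intervalIntegrable (by continuity) 0 T)
  have hmono := intervalIntegral.integral_mono_on hT0 hi1 hi2 pt
  have hcalc : (∫ t in (0:ℝ)..T, Real.exp (-(ε * d)) * Real.exp (t * ε))
      = Real.exp (-(ε * d)) * (ε⁻¹ * (Real.exp (T * ε) - 1)) := by
    rw [intervalIntegral.integral_const_mul]
    congr 1
    rw [intervalIntegral.integral_comp_mul_right Real.exp hε.ne']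
    simp [integral_exp, Real.exp_zero]
  have hbound : Real.exp (-(ε * d)) * (ε⁻¹ * (Real.exp (T * ε) - 1)) ≤ Real.exp ε / ε := by
    rw [div_eq_mul_inv]
    have key : Real.exp (-(ε * d)) * (Real.exp (T * ε) - 1) ≤ Real.exp ε := by
      calc Real.exp (-(ε * d)) * (Real.exp (T * ε) - 1)
          ≤ Real.exp (-(ε * d)) * Real.exp (T * ε) := by
            have := Real.exp_pos (-(ε * d))
            nlinarith
        _ = Real.exp (T * ε - ε * d) := by rw [← Real.exp_add]; ring_nf
        _ ≤ Real.exp ε := Real.exp_le_exp.mpr (by nlinarith)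
    calc Real.exp (-(ε * d)) * (ε⁻¹ * (Real.exp (T * ε) - 1))
        = (Real.exp (-(ε * d)) * (Real.exp (T * ε) - 1)) * ε⁻¹ := by ring
      _ ≤ Real.exp ε * ε⁻¹ :=
          mul_le_mul_of_nonneg_right key (inv_nonneg.mpr hε.le)
  calc (∫ t in (0:ℝ)..T, rho ε p (γ t))
      ≤ ∫ t in (0:ℝ)..T, Real.exp (-(ε * d)) * Real.exp (t * ε) := hmono
    _ = Real.exp (-(ε * d)) * (ε⁻¹ * (Real.exp (T * ε) - 1)) := hcalc
    _ ≤ Real.exp ε / ε := hbound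

lemma confDist_bddBelow (ε : ℝ) (p x y : X) :
    BddBelow { l : ℝ | ∃ (γ : ℝ → X) (T : ℝ), 0 ≤ T ∧ IsUnitSpeed γ T ∧
      γ 0 = x ∧ γ T = y ∧ l = ∫ t in (0:ℝ)..T, rho ε p (γ t) } := by
  refine ⟨0, ?_⟩
  rintro l ⟨γ, T, hT0, _, _, _, rfl⟩
  exact intervalIntegral.integral_nonneg hT0 (fun u _ => (Real.exp_pos _).le)

lemma short_curve (hint : Intrinsic X) (p x : X) :
    ∃ (γ : ℝ → X) (T : ℝ), 0 ≤ T ∧ IsUnitSpeed γ T ∧ γ 0 = x ∧ γ T = p ∧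
      T ≤ dist x p + 1 := by
  set d := dist x p with hd
  have hd0 : 0 ≤ d := dist_nonneg
  have hpos : (0:ℝ) < d + 1 := by linarith
  obtain ⟨γ, T, hT0, hus, h0, hT, hlen⟩ :=
    hint x p (1 + 1 / (d + 1)) (by have := one_div_pos.mpr hpos; linarith)
  refine ⟨γ, T, hT0, hus, h0, hT, ?_⟩
  have : (1 + 1 / (d + 1)) * d ≤ d + 1 := by
    rw [add_mul, one_mul, div_mul_eq_mul_div]
    have h1 : d / (d + 1) ≤ 1 := by
      rw [div_le_one hpos]; linarith
    calc d + 1 * d / (d + 1) = d + d / (d + 1) := by ring_nf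
      _ ≤ d + 1 := by linarith
  linarith

end Aux

/-- `d_ε(x,p) ≤ e^ε/ε` for every `x`, hence `diam(X, d_ε) ≤ 2e^ε/ε`. -/
theorem confDist_bounded {X : Type*} [MetricSpace X] (hint : Intrinsic X)
    (p : X) (ε : ℝ) (hε : 0 < ε) :
    (∀ x : X, confDist (rho ε p) x p ≤ Real.exp ε / ε) ∧
      (∀ x y : X, confDist (rho ε p) x y ≤ 2 * Real.exp ε / ε) := by
  have part1 : ∀ x : X, confDist (rho ε p) x p ≤ Real.exp ε / ε := by
    intro x
    obtain ⟨γ, T, hT0, hus, h0, hT, hlen⟩ := short_curve hint p x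
    unfold confDist
    exact le_trans (csInf_le (confDist_bddBelow ε p x p) ⟨γ, T, hT0, hus, h0, hT, rfl⟩)
      (leg_bound hε p x hT0 hus h0 hlen)
  refine ⟨part1, ?_⟩
  intro x y
  obtain ⟨γ1, T1, hT10, hus1, h10, h1T, hlen1⟩ := short_curve hint p x
  obtain ⟨γ2, T2, hT20, hus2, h20, h2T, hlen2⟩ := short_curve hint p y
  set δ : ℝ → X := fun u => γ2 (T2 - u) with hδ
  have husδ : IsUnitSpeed δ T2 := isUnitSpeed_reverse hus2
  have hδ0 : δ 0 = p := by simp [hδ, h2T]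
  have hδT : δ T2 = y := by simp [hδ, h20]
  set Γ : ℝ → X := fun t => if t ≤ T1 then γ1 t else δ (t - T1) with hΓ
  have husΓ : IsUnitSpeed Γ (T1 + T2) :=
    isUnitSpeed_concat hus1 husδ hT20 (by rw [h1T, hδ0])
  have hΓ0 : Γ 0 = x := by simp [hΓ, if_pos hT10, h10]
  have hΓT : Γ (T1 + T2) = y := by
    by_cases hc : T1 + T2 ≤ T1
    · have hT2z : T2 = 0 := le_antisymm (by linarith) hT20
      have hy : y = p := by rw [← hδT, hT2z, hδ0]
      simp [hΓ, hc, hT2z, h1T, hy]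
    · simp only [hΓ, if_neg hc, add_sub_cancel_left]
      exact hδT
  have e1 : Set.EqOn (fun t => rho ε p (Γ t)) (fun t => rho ε p (γ1 t))
      (Set.uIcc 0 T1) := by
    rw [Set.uIcc_of_le hT10]
    intro u hu
    simp [hΓ, if_pos hu.2]
  have e2 : Set.EqOn (fun t => rho ε p (Γ t)) (fun t => rho ε p (δ (t - T1)))
      (Set.uIcc T1 (T1 + T2)) := by
    rw [Set.uIcc_of_le (by linarith : T1 ≤ T1 + T2)]
    intro u hu
    by_cases hc : u ≤ T1
    · have hu1 : u = T1 := le_antisymm hc hu.1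
      simp [hΓ, hu1, h1T, hδ0]
    · simp [hΓ, if_neg hc]
  have hcδ : ContinuousOn (fun t => rho ε p (δ (t - T1))) (Set.Icc T1 (T1 + T2)) := by
    apply (rho_continuous ε p).comp_continuousOn
    apply husδ.1.comp ((continuous_id.sub continuous_const).continuousOn)
    intro u hu
    exact ⟨by simp; linarith [hu.1], by simp; linarith [hu.2]⟩
  have ia : IntervalIntegrable (fun t => rho ε p (Γ t)) MeasureTheory.volume 0 T1 := by
    apply ContinuousOn.intervalIntegrable
    exact ContinuousOn.congr ((rho_continuous ε p).comp_continuousOn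
      (by rw [Set.uIcc_of_le hT10]; exact hus1.1)) e1
  have ib : IntervalIntegrable (fun t => rho ε p (Γ t)) MeasureTheory.volume T1 (T1 + T2) := by
    apply ContinuousOn.intervalIntegrable
    exact ContinuousOn.congr (by rwa [Set.uIcc_of_le (by linarith : T1 ≤ T1 + T2)]) e2
  have hsplit := intervalIntegral.integral_add_adjacent_intervals ia ib
  have hc1 : (∫ t in (0:ℝ)..T1, rho ε p (Γ t)) = ∫ t in (0:ℝ)..T1, rho ε p (γ1 t) :=
    intervalIntegral.integral_congr e1
  have hc2 : (∫ t in T1..(T1 + T2), rho ε p (Γ t)) = ∫ t in (0:ℝ)..T2, rho ε p (γ2 t) := by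
    rw [intervalIntegral.integral_congr e2,
      intervalIntegral.integral_comp_sub_right (fun t => rho ε p (δ t)) T1]
    simp only [sub_self, add_sub_cancel_left]
    have : (fun t => rho ε p (δ t)) = (fun t => rho ε p (γ2 (T2 - t))) := rfl
    rw [this, intervalIntegral.integral_comp_sub_left (fun t => rho ε p (γ2 t)) T2]
    simp
  have b1 := leg_bound hε p x hT10 hus1 h10 hlen1
  have b2 := leg_bound hε p y hT20 hus2 h20 hlen2
  have hle : (∫ t in (0:ℝ)..(T1 + T2), rho ε p (Γ t)) ≤ 2 * Real.exp ε / ε := by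
    rw [← hsplit, hc1, hc2]
    have : 2 * Real.exp ε / ε = Real.exp ε / ε + Real.exp ε / ε := by ring
    rw [this]
    exact add_le_add b1 b2
  unfold confDist
  exact le_trans (csInf_le (confDist_bddBelow ε p x y)
    ⟨Γ, T1 + T2, by linarith, husΓ, hΓ0, hΓT, rfl⟩) hle
end

section
/- Let X be an intrinsic δ-hyperbolic space and let γ : x ↷ y be an h-short arc with subdivision point x_γ determined by p (so that l(γ[x, x_γ]) = (y|p)_x). Let α : x ↷ p be an h-short arc with subdivision points x_α and p_α determined by y. Then | d(p, x_γ) − (x|y)_p | ≤ 4δ + 4h. -/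
open Set Filter Metric MeasureTheory

/-- for an `h`-short arc `γ : x ↷ y` in an intrinsic `δ`-hyperbolic
space with subdivision point `x_γ = γ a` induced by `p` (so `l(γ[x,x_γ]) = (y|p)_x`),
one has `|d(p, x_γ) - (x|y)_p| ≤ 4δ + 4h`. -/
theorem dist_subdivision_point_gromov_product {X : Type*} [MetricSpace X]
    (δ h : ℝ) (hδ : 0 ≤ δ) (hh : 0 < h)
    (hint : Intrinsic X) (hhyp : GromovHyperbolic X δ)
    (p x y : X) (γ : ℝ → X) (L : ℝ) (hL : 0 ≤ L)
    (hus : IsUnitSpeed γ L) (h0 : γ 0 = x) (hLy : γ L = y)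
    (hshort : L ≤ dist x y + h)
    (a : ℝ) (ha : a ∈ Set.Icc 0 L) (haval : a = gprod y p x) :
    |dist p (γ a) - gprod x y p| ≤ 4 * δ + 4 * h := by
  obtain ⟨hcont, hvar⟩ := hus
  obtain ⟨ha0, haL⟩ := ha
  -- distance bounds from arclength
  have key : ∀ s t : ℝ, 0 ≤ s → s ≤ t → t ≤ L → dist (γ s) (γ t) ≤ t - s := by
    intro s t hs hst htL
    have h1 := hvar s t hs hst htL
    have h2 : edist (γ s) (γ t) ≤ eVariationOn γ (Set.Icc s t) :=
      eVariationOn.edist_le γ (Set.left_mem_Icc.mpr hst) (Set.right_mem_Icc.mpr hst)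
    rw [h1, edist_dist] at h2
    exact (ENNReal.ofReal_le_ofReal_iff (by linarith)).mp h2
  have hd1 : dist x (γ a) ≤ a := by
    have := key 0 a le_rfl ha0 haL; rw [h0] at this; linarith
  have hd2 : dist (γ a) y ≤ L - a := by
    have := key a L ha0 haL le_rfl; rw [hLy] at this; linarith
  have hdxy : dist x y ≤ L := by
    have := key 0 L le_rfl hL le_rfl; rw [h0, hLy] at this; linarith
  set q := γ a with hq
  have hyp := hhyp x p y q
  unfold gprod at hyp haval ⊢
  have c1 : dist y x = dist x y := dist_comm y x
  have c2 : dist p x = dist x p := dist_comm p x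
  have c3 : dist y p = dist p y := dist_comm y p
  have c4 : dist x q = dist q x := dist_comm x q
  have c5 : dist y q = dist q y := dist_comm y q
  have c6 : dist p q = dist q p := dist_comm p q
  have t1 : dist p x ≤ dist p q + dist q x := dist_triangle p q x
  rw [abs_le]
  rcases le_total ((dist x q + dist p q - dist x p) / 2)
      ((dist p q + dist y q - dist p y) / 2) with hc | hc
  · rw [min_eq_left hc] at hyp
    constructor <;> linarith
  · rw [min_eq_right hc] at hyp
    constructor <;> linarith
end

section
/- Let X be an intrinsic metric space, p ∈ X, and d_ε the conformal deformation by ρ_ε(x) = exp(−ε d(x,p)). If x, y ∈ X satisfy ε d(x,y) ≤ 1/2 and γ : x ↷ y is an h-short arc with l(γ) ≤ 2 d(x,y) and x_γ ∈ γ, then d_ε(x,y) ≤ 2e · ρ_ε(x_γ) · d(x,y). -/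
open Set Filter Metric MeasureTheory

/-- if `ε d(x,y) ≤ 1/2` and `γ : x ↷ y` is an `h`-short arc with
`l(γ) ≤ 2 d(x,y)` and `x_γ ∈ γ`, then `d_ε(x,y) ≤ 2e · ρ_ε(x_γ) · d(x,y)`. -/
theorem confDist_upper_small_scale {X : Type*} [MetricSpace X]
    (hint : Intrinsic X) (p : X) (ε h : ℝ) (hε : 0 < ε) (hh : 0 ≤ h)
    (x y : X) (hxy : ε * dist x y ≤ 1 / 2)
    (γ : ℝ → X) (L : ℝ) (hL : 0 ≤ L) (hus : IsUnitSpeed γ L)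
    (h0 : γ 0 = x) (hLy : γ L = y)
    (hshort : L ≤ dist x y + h) (hlen : L ≤ 2 * dist x y)
    (a : ℝ) (ha : a ∈ Set.Icc 0 L) :
    confDist (rho ε p) x y ≤ 2 * Real.exp 1 * rho ε p (γ a) * dist x y := by
  obtain ⟨hcont, hvar⟩ := hus
  -- distance bound along the curve
  have hbv : BoundedVariationOn γ (Set.Icc 0 L) := by
    rw [BoundedVariationOn, hvar 0 L le_rfl hL le_rfl]; exact ENNReal.ofReal_ne_top
  have hdistle : ∀ t ∈ Set.Icc (0:ℝ) L, dist (γ t) (γ a) ≤ L := by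
    intro t ht
    have := hbv.dist_le ht ha
    calc dist (γ t) (γ a) ≤ (eVariationOn γ (Set.Icc 0 L)).toReal := this
      _ = L := by rw [hvar 0 L le_rfl hL le_rfl, sub_zero, ENNReal.toReal_ofReal hL]
  have hρa : 0 < rho ε p (γ a) := Real.exp_pos _
  -- pointwise bound: rho (γ t) ≤ e * rho (γ a)
  have hpt : ∀ t ∈ Set.Icc (0:ℝ) L, rho ε p (γ t) ≤ Real.exp 1 * rho ε p (γ a) := by
    intro t ht
    have h1 : dist (γ t) p ≥ dist (γ a) p - L := by
      have := abs_dist_sub_le (γ t) (γ a) p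
      have h2 := hdistle t ht
      have := abs_le.1 this
      linarith [this.1]
    rw [rho, rho, ← Real.exp_add]
    apply Real.exp_le_exp.2
    have hεL : ε * L ≤ 1 := by nlinarith
    nlinarith
  -- the curve γ itself gives an element of the set
  have hρcont : ContinuousOn (fun t => rho ε p (γ t)) (Set.Icc 0 L) := by
    simp only [rho]
    fun_prop
  have hint1 : IntervalIntegrable (fun t => rho ε p (γ t)) MeasureTheory.volume 0 L := by
    apply ContinuousOn.intervalIntegrable
    rwa [Set.uIcc_of_le hL]
  have hIle : ∫ t in (0:ℝ)..L, rho ε p (γ t) ≤ Real.exp 1 * rho ε p (γ a) * L := by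
    have h1 := intervalIntegral.integral_mono_on hL hint1
      (intervalIntegrable_const (c := Real.exp 1 * rho ε p (γ a)))
      (fun t ht => hpt t ht)
    rw [intervalIntegral.integral_const, smul_eq_mul, sub_zero] at h1
    calc ∫ t in (0:ℝ)..L, rho ε p (γ t) ≤ L * (Real.exp 1 * rho ε p (γ a)) := h1
      _ = Real.exp 1 * rho ε p (γ a) * L := by ring
  have hmem : (∫ t in (0:ℝ)..L, rho ε p (γ t)) ∈
      { l : ℝ | ∃ (γ' : ℝ → X) (T : ℝ), 0 ≤ T ∧ IsUnitSpeed γ' T ∧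
        γ' 0 = x ∧ γ' T = y ∧ l = ∫ t in (0:ℝ)..T, rho ε p (γ' t) } :=
    ⟨γ, L, hL, ⟨hcont, hvar⟩, h0, hLy, rfl⟩
  have hbdd : BddBelow { l : ℝ | ∃ (γ' : ℝ → X) (T : ℝ), 0 ≤ T ∧ IsUnitSpeed γ' T ∧
      γ' 0 = x ∧ γ' T = y ∧ l = ∫ t in (0:ℝ)..T, rho ε p (γ' t) } := by
    refine ⟨0, fun l hl => ?_⟩
    obtain ⟨γ', T, hT, _, _, _, hleq⟩ := hl
    rw [hleq]
    exact intervalIntegral.integral_nonneg hT (fun u _ => (Real.exp_pos _).le)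
  calc confDist (rho ε p) x y ≤ ∫ t in (0:ℝ)..L, rho ε p (γ t) := csInf_le hbdd hmem
    _ ≤ Real.exp 1 * rho ε p (γ a) * L := hIle
    _ ≤ Real.exp 1 * rho ε p (γ a) * (2 * dist x y) :=
        mul_le_mul_of_nonneg_left hlen (mul_pos (Real.exp_pos 1) hρa).le
    _ = 2 * Real.exp 1 * rho ε p (γ a) * dist x y := by ring
end

section
/- Let X be a metric space, p ∈ X, ρ_ε(x) = exp(−ε d(x,p)), and suppose γ : x ↷ y is an arc such that d(p,u) ≥ d(p,x_γ) + d(x_γ,u) − 8δ − 8h for all u ∈ γ, for some point x_γ ∈ γ. If additionally γ is h-short, then ∫_γ ρ_ε ds ≤ (2/ε) e^{8δε} e^{9hε} ρ_ε(x_γ). -/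
open Set Filter Metric MeasureTheory

/-- if `γ` is an `h`-short arc such that
`d(p,u) ≥ d(p,x_γ) + d(x_γ,u) - 8δ - 8h` for all `u ∈ γ`, where `x_γ = γ a`,
then `∫_γ ρ_ε ds ≤ (2/ε) e^{8δε} e^{9hε} ρ_ε(x_γ)`. -/
theorem rho_integral_upper_bound {X : Type*} [MetricSpace X]
    (δ h ε : ℝ) (hδ : 0 ≤ δ) (hh : 0 ≤ h) (hε : 0 < ε)
    (p : X) (γ : ℝ → X) (L : ℝ) (hL : 0 ≤ L) (hus : IsUnitSpeed γ L)
    (hshort : L ≤ dist (γ 0) (γ L) + h)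
    (a : ℝ) (ha : a ∈ Set.Icc 0 L)
    (hkey : ∀ t ∈ Set.Icc (0:ℝ) L,
      dist p (γ t) ≥ dist p (γ a) + dist (γ a) (γ t) - 8 * δ - 8 * h) :
    (∫ t in (0:ℝ)..L, rho ε p (γ t)) ≤
      (2 / ε) * Real.exp (8 * δ * ε) * Real.exp (9 * h * ε) * rho ε p (γ a) := by

  obtain ⟨hcont, hvar⟩ := hus
  obtain ⟨ha0, haL⟩ := ha
  -- distance upper bound from unit speed
  have hdle : ∀ s t : ℝ, 0 ≤ s → s ≤ t → t ≤ L → dist (γ s) (γ t) ≤ t - s := by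
    intro s t hs hst htL
    have h1 : edist (γ s) (γ t) ≤ eVariationOn γ (Set.Icc s t) :=
      eVariationOn.edist_le γ ⟨le_refl s, hst⟩ ⟨hst, le_refl t⟩
    rw [hvar s t hs hst htL, edist_dist] at h1
    exact (ENNReal.ofReal_le_ofReal_iff (by linarith)).mp h1
  -- distance lower bound from h-shortness
  have hdge : ∀ s t : ℝ, 0 ≤ s → s ≤ t → t ≤ L → t - s - h ≤ dist (γ s) (γ t) := by
    intro s t hs hst htL
    have h1 : dist (γ 0) (γ s) ≤ s - 0 := hdle 0 s le_rfl hs (by linarith)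
    have h2 : dist (γ t) (γ L) ≤ L - t := hdle t L (by linarith) htL le_rfl
    have h3 : dist (γ 0) (γ L) ≤ dist (γ 0) (γ s) + dist (γ s) (γ t) + dist (γ t) (γ L) :=
      dist_triangle4 _ _ _ _
    linarith
  have habs : ∀ t ∈ Set.Icc (0:ℝ) L, |t - a| - h ≤ dist (γ a) (γ t) := by
    intro t ⟨ht0, htL⟩
    rcases le_total t a with hta | hat
    · rw [abs_of_nonpos (by linarith), dist_comm]
      have := hdge t a ht0 hta haL; linarith
    · rw [abs_of_nonneg (by linarith)]
      have := hdge a t ha0 hat htL; linarith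
  set C : ℝ := Real.exp (8 * δ * ε) * Real.exp (9 * h * ε) * rho ε p (γ a) with hC
  have hCpos : 0 < C := by
    have : 0 < rho ε p (γ a) := Real.exp_pos _
    positivity
  -- pointwise bound
  have hpt : ∀ t ∈ Set.Icc (0:ℝ) L,
      rho ε p (γ t) ≤ C * Real.exp (-(ε * |t - a|)) := by
    intro t ht
    have h1 := hkey t ht
    have h2 := habs t ht
    have h3 : dist p (γ a) + |t - a| - h - 8 * δ - 8 * h ≤ dist (γ t) p := by
      have hc : dist (γ t) p = dist p (γ t) := dist_comm _ _
      linarith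
    have : rho ε p (γ t) ≤ Real.exp (-(ε * (dist p (γ a) + |t - a| - h - 8 * δ - 8 * h))) := by
      unfold rho
      apply Real.exp_le_exp.mpr
      nlinarith [hε.le]
    refine this.trans (le_of_eq ?_)
    rw [hC]
    unfold rho
    rw [← Real.exp_add, ← Real.exp_add, ← Real.exp_add, dist_comm (γ a) p]
    ring_nf
  -- integrability
  have hIcc : Set.uIcc (0:ℝ) L = Set.Icc 0 L := Set.uIcc_of_le hL
  have hint1 : IntervalIntegrable (fun t => rho ε p (γ t)) volume 0 L := by
    apply ContinuousOn.intervalIntegrable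
    rw [hIcc]
    exact (Real.continuous_exp.comp (continuous_neg.comp
      ((continuous_const.mul (continuous_id.dist continuous_const))))).comp_continuousOn'
      hcont |>.congr (fun t ht => rfl)
  have hgcont : Continuous (fun t : ℝ => C * Real.exp (-(ε * |t - a|))) := by
    continuity
  have hint2 : IntervalIntegrable (fun t : ℝ => C * Real.exp (-(ε * |t - a|))) volume 0 L :=
    hgcont.intervalIntegrable 0 L
  have hmono : (∫ t in (0:ℝ)..L, rho ε p (γ t)) ≤
      ∫ t in (0:ℝ)..L, C * Real.exp (-(ε * |t - a|)) := by
    apply intervalIntegral.integral_mono_on hL hint1 hint2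
    exact hpt
  -- compute the majorant integral
  have hsplit : (∫ t in (0:ℝ)..L, C * Real.exp (-(ε * |t - a|))) =
      (∫ t in (0:ℝ)..a, C * Real.exp (-(ε * |t - a|))) +
      ∫ t in a..L, C * Real.exp (-(ε * |t - a|)) := by
    rw [intervalIntegral.integral_add_adjacent_intervals
      (hgcont.intervalIntegrable 0 a) (hgcont.intervalIntegrable a L)]
  have hI1 : (∫ t in (0:ℝ)..a, C * Real.exp (-(ε * |t - a|))) ≤ C / ε := by
    have heq : (∫ t in (0:ℝ)..a, C * Real.exp (-(ε * |t - a|))) =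
        ∫ t in (0:ℝ)..a, C * Real.exp (ε * (t - a)) := by
      apply intervalIntegral.integral_congr
      intro t ht
      rw [Set.uIcc_of_le ha0] at ht
      show C * Real.exp (-(ε * |t - a|)) = C * Real.exp (ε * (t - a))
      rw [abs_of_nonpos (by linarith [ht.2])]
      ring_nf
    rw [heq]
    have hderiv : ∀ t ∈ Set.uIcc (0:ℝ) a, HasDerivAt
        (fun t => C * Real.exp (ε * (t - a)) / ε) (C * Real.exp (ε * (t - a))) t := by
      intro t _
      have h1 : HasDerivAt (fun t : ℝ => ε * (t - a)) ε t := by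
        simpa using ((hasDerivAt_id t).sub_const a).const_mul ε
      have h2 := (h1.exp.const_mul C).div_const ε
      refine h2.congr_deriv ?_
      field_simp
    have hcg : Continuous (fun t : ℝ => C * Real.exp (ε * (t - a))) := by
      exact continuous_const.mul ((continuous_const.mul (continuous_id.sub continuous_const)).rexp)
    rw [intervalIntegral.integral_eq_sub_of_hasDerivAt hderiv (hcg.intervalIntegrable 0 a)]
    · simp only [sub_self, mul_zero, Real.exp_zero, mul_one]
      have : 0 < Real.exp (ε * (0 - a)) := Real.exp_pos _
      have : 0 ≤ C * Real.exp (ε * (0 - a)) / ε := by positivity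
      linarith [this]
  have hI2 : (∫ t in a..L, C * Real.exp (-(ε * |t - a|))) ≤ C / ε := by
    have heq : (∫ t in a..L, C * Real.exp (-(ε * |t - a|))) =
        ∫ t in a..L, C * Real.exp (-(ε * (t - a))) := by
      apply intervalIntegral.integral_congr
      intro t ht
      rw [Set.uIcc_of_le haL] at ht
      show C * Real.exp (-(ε * |t - a|)) = C * Real.exp (-(ε * (t - a)))
      rw [abs_of_nonneg (by linarith [ht.1])]
    rw [heq]
    have hderiv : ∀ t ∈ Set.uIcc a L, HasDerivAt
        (fun t => -(C * Real.exp (-(ε * (t - a)))) / ε) (C * Real.exp (-(ε * (t - a)))) t := by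
      intro t _
      have h1 : HasDerivAt (fun t : ℝ => -(ε * (t - a))) (-ε) t := by
        simpa [Pi.neg_def] using (((hasDerivAt_id t).sub_const a).const_mul ε).neg
      have h2 := ((h1.exp.const_mul C).neg).div_const ε
      refine h2.congr_deriv ?_
      field_simp
    have hcg : Continuous (fun t : ℝ => C * Real.exp (-(ε * (t - a)))) := by
      exact continuous_const.mul ((continuous_const.mul (continuous_id.sub continuous_const)).neg.rexp)
    rw [intervalIntegral.integral_eq_sub_of_hasDerivAt hderiv (hcg.intervalIntegrable a L)]
    · simp only [sub_self, mul_zero, neg_zero, Real.exp_zero, mul_one]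
      have h0 : 0 < Real.exp (-(ε * (L - a))) := Real.exp_pos _
      have h1 : 0 ≤ C * Real.exp (-(ε * (L - a))) / ε := by positivity
      have h2 : -(C * Real.exp (-(ε * (L - a)))) / ε = -(C * Real.exp (-(ε * (L - a))) / ε) := by
        ring
      have h3 : -C / ε = -(C / ε) := by ring
      rw [h2, h3]
      linarith [h1]
  have hfin : (∫ t in (0:ℝ)..L, C * Real.exp (-(ε * |t - a|))) ≤ 2 / ε * C := by
    rw [hsplit]
    have : C / ε + C / ε = 2 / ε * C := by ring
    linarith
  calc (∫ t in (0:ℝ)..L, rho ε p (γ t)) ≤ _ := hmono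
    _ ≤ 2 / ε * C := hfin
    _ = 2 / ε * Real.exp (8 * δ * ε) * Real.exp (9 * h * ε) * rho ε p (γ a) := by
        rw [hC]; ring
end
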